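/- arXiv:2508.07503 — 4 statements merged into one kernel-verified Lean document; each statement's English description precedes it below -/
import Mathlib

section
/- Let p > 0 and ε ∈ (0,1). There exists C > 0, independent of ε, such that for all positive φ, ψ ∈ C¹(closure of B_{1/ε}), ‖φ ψ^{3/(p+1)}‖_{L^∞(B_{1/ε})}^{p+2} ≤ C ‖φ‖_{L¹} ‖ψ‖_{L^∞}^{3/(p+1)} ( ‖ψ‖_{L^∞}² ∫ φ^{p−1} ψ φ_x² + ∫ φ^{p+1} ψ ψ_x² + ε^{p+2} ‖φ‖_{L¹}^{p+1} ‖ψ‖_{L^∞}³ ), all norms and integrals over B_{1/ε}. -/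
/-!
Put `g = φ ψ^r` with `r = 3 / (p + 1)`. The derivative of `g^((p+2)/2)` is
`√g · (p+2)/2 · g^((p-1)/2) g'`, so the fundamental theorem of calculus between a point where `g`
attains its essential supremum and a point where `g` lies below its average, followed by
Cauchy–Schwarz, gives
`sup g^(p+2) ≤ 2 (avg g)^(p+2) + (p+2)²/2 · ∫ g · ∫ g^(p-1) g'²`.
Since `r (p + 1) = 3`, pointwise
`g^(p-1) g'² ≤ 2 (φ^(p-1) ψ³ φ'² + r² φ^(p+1) ψ ψ'²)`; then `ψ ≤ ‖ψ‖_∞` bounds `ψ³` by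
`‖ψ‖_∞² ψ` and `∫ g` by `‖ψ‖_∞^r ∫ φ`. On `B_{1/ε}` the average carries the factor `ε / 2`, which
produces the penalization term `ε^(p+2) (∫ φ)^(p+1) ‖ψ‖_∞³`.
-/

open MeasureTheory Set Filter
open scoped Interval

section EssSup

variable {a b : ℝ} {f : ℝ → ℝ}

theorem ContinuousOn.isBoundedUnder_le_ae_restrict_Ioo (hf : ContinuousOn f (Icc a b)) :
    IsBoundedUnder (· ≤ ·) (ae (volume.restrict (Ioo a b))) f := by
  obtain ⟨c, hc⟩ := isCompact_Icc.bddAbove_image hf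
  refine ⟨c, eventually_map.2 ?_⟩
  filter_upwards [ae_restrict_mem measurableSet_Ioo] with t ht
  exact hc (mem_image_of_mem f (Ioo_subset_Icc_self ht))

theorem ContinuousOn.le_essSup_restrict_Ioo (hab : a < b) (hf : ContinuousOn f (Icc a b))
    {x : ℝ} (hx : x ∈ Icc a b) : f x ≤ essSup f (volume.restrict (Ioo a b)) := by
  set m := essSup f (volume.restrict (Ioo a b))
  have hle : ∀ᵐ t ∂volume.restrict (Icc a b), f t ≤ m := by
    rw [← Measure.restrict_congr_set Ioo_ae_eq_Icc]
    exact ae_le_essSup hf.isBoundedUnder_le_ae_restrict_Ioo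
  -- `f ≤ m` a.e. is the a.e. equality `min f m = f` of continuous functions
  have hmin : EqOn (fun t => min (f t) m) f (Icc a b) :=
    Measure.eqOn_Icc_of_ae_eq volume hab.ne (hle.mono fun t ht => min_eq_left ht)
      (hf.inf continuousOn_const) hf
  exact min_eq_left_iff.1 (hmin hx)

theorem ContinuousOn.exists_essSup_restrict_Ioo_eq (hab : a < b) (hf : ContinuousOn f (Icc a b)) :
    ∃ x ∈ Icc a b, essSup f (volume.restrict (Ioo a b)) = f x := by
  have hne : (Icc a b).Nonempty := nonempty_Icc.2 hab.le
  obtain ⟨x, hx, hmax⟩ := isCompact_Icc.exists_isMaxOn hne hf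
  obtain ⟨y, -, hmin⟩ := isCompact_Icc.exists_isMinOn hne hf
  have : (ae (volume.restrict (Ioo a b))).NeBot := by
    rw [ae_neBot, Ne, Measure.restrict_eq_zero, Real.volume_Ioo]
    simpa using hab
  have hIoo : ∀ᵐ t ∂volume.restrict (Ioo a b), t ∈ Icc a b :=
    (ae_restrict_mem measurableSet_Ioo).mono fun _ ht => Ioo_subset_Icc_self ht
  refine ⟨x, hx, le_antisymm (essSup_le_of_ae_le _ (hIoo.mono fun t ht => hmax ht)
    (isCoboundedUnder_le_of_eventually_le _ (hIoo.mono fun t ht => hmin ht)))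
    (hf.le_essSup_restrict_Ioo hab hx)⟩

end EssSup

theorem sub_le_setIntegral_abs_of_hasDerivAt {a b x y : ℝ} {w w' : ℝ → ℝ}
    (hw : ∀ t ∈ Icc a b, HasDerivAt w (w' t) t) (hw' : ContinuousOn w' (Icc a b))
    (hx : x ∈ Icc a b) (hy : y ∈ Icc a b) :
    w x - w y ≤ ∫ t in Ioo a b, |w' t| := by
  have hsub : uIcc y x ⊆ Icc a b := uIcc_subset_Icc hy hx
  rw [← intervalIntegral.integral_eq_sub_of_hasDerivAt (fun t ht => hw t (hsub ht))
    ((hw'.mono hsub).intervalIntegrable), ← integral_Icc_eq_integral_Ioo]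
  calc ∫ t in y..x, w' t ≤ ∫ t in Ι y x, |w' t| :=
        (le_abs_self _).trans <| by
          simpa using intervalIntegral.norm_integral_le_integral_norm_uIoc (f := w') (a := y)
    _ ≤ ∫ t in Icc a b, |w' t| :=
        setIntegral_mono_set hw'.abs.integrableOn_Icc
          (Eventually.of_forall fun t => abs_nonneg _) (uIoc_subset_uIcc.trans hsub).eventuallyLE

theorem sq_integral_mul_le_of_nonneg {α : Type*} [MeasurableSpace α] {μ : Measure α}
    {f g : α → ℝ} (hf0 : 0 ≤ᵐ[μ] f) (hg0 : 0 ≤ᵐ[μ] g) (hf : MemLp f 2 μ)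
    (hg : MemLp g 2 μ) :
    (∫ x, f x * g x ∂μ) ^ 2 ≤ (∫ x, f x ^ 2 ∂μ) * ∫ x, g x ^ 2 ∂μ := by
  have hholder := integral_mul_le_Lp_mul_Lq_of_nonneg Real.HolderConjugate.two_two hf0 hg0
    (by simpa using hf) (by simpa using hg)
  simp only [Real.rpow_two, ← Real.sqrt_eq_rpow] at hholder
  have hfg0 : 0 ≤ ∫ x, f x * g x ∂μ := integral_nonneg_of_ae <| by
    filter_upwards [hf0, hg0] with x hfx hgx using mul_nonneg hfx hgx
  calc (∫ x, f x * g x ∂μ) ^ 2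
      ≤ (√(∫ x, f x ^ 2 ∂μ) * √(∫ x, g x ^ 2 ∂μ)) ^ 2 :=
        pow_le_pow_left₀ hfg0 hholder 2
    _ = (∫ x, f x ^ 2 ∂μ) * ∫ x, g x ^ 2 ∂μ := by
        rw [mul_pow, Real.sq_sqrt (integral_nonneg fun x => sq_nonneg _),
          Real.sq_sqrt (integral_nonneg fun x => sq_nonneg _)]

theorem ContinuousOn.memLp_restrict_Ioo {a b : ℝ} {f : ℝ → ℝ}
    (hf : ContinuousOn f (Icc a b)) (q : ENNReal) : MemLp f q (volume.restrict (Ioo a b)) := by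
  obtain ⟨C, hC⟩ := isCompact_Icc.exists_bound_of_continuousOn hf
  refine MemLp.of_bound
    ((hf.mono Ioo_subset_Icc_self).aestronglyMeasurable measurableSet_Ioo) C ?_
  filter_upwards [ae_restrict_mem measurableSet_Ioo] with t ht
  exact hC t (Ioo_subset_Icc_self ht)

theorem rpow_add_two_le_of_hasDerivAt (p : ℝ) {a b x y : ℝ} {g g' : ℝ → ℝ}
    (hg : ∀ t ∈ Icc a b, HasDerivAt g (g' t) t) (hg' : ContinuousOn g' (Icc a b))
    (hpos : ∀ t ∈ Icc a b, 0 < g t) (hx : x ∈ Icc a b) (hy : y ∈ Icc a b) :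
    g x ^ (p + 2) ≤ 2 * g y ^ (p + 2) +
      (p + 2) ^ 2 / 2 * (∫ t in Ioo a b, g t) * ∫ t in Ioo a b, g t ^ (p - 1) * g' t ^ 2 := by
  have hgc : ContinuousOn g (Icc a b) := fun t ht => (hg t ht).continuousAt.continuousWithinAt
  set k : ℝ → ℝ := fun t => (p + 2) / 2 * g t ^ ((p - 1) / 2) * g' t
  have hkc : ContinuousOn k (Icc a b) :=
    (continuousOn_const.mul (hgc.rpow_const fun t ht => Or.inl (hpos t ht).ne')).mul hg'
  have hw : ∀ t ∈ Icc a b, HasDerivAt (fun s => g s ^ ((p + 2) / 2)) (√(g t) * k t) t := by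
    intro t ht
    convert (hg t ht).rpow_const (p := (p + 2) / 2) (Or.inl (hpos t ht).ne') using 1
    rw [Real.sqrt_eq_rpow, show (p + 2) / 2 - 1 = 1 / 2 + (p - 1) / 2 by ring,
      Real.rpow_add (hpos t ht)]
    ring
  set J := ∫ t in Ioo a b, √(g t) * |k t|
  have hFTC : g x ^ ((p + 2) / 2) - g y ^ ((p + 2) / 2) ≤ J := by
    simpa only [abs_mul, abs_of_nonneg (Real.sqrt_nonneg _)] using
      sub_le_setIntegral_abs_of_hasDerivAt hw (hgc.sqrt.mul hkc) hx hy
  have hCS : J ^ 2 ≤ (∫ t in Ioo a b, g t) *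
      ((p + 2) ^ 2 / 4 * ∫ t in Ioo a b, g t ^ (p - 1) * g' t ^ 2) := by
    calc J ^ 2 ≤ (∫ t in Ioo a b, √(g t) ^ 2) * ∫ t in Ioo a b, |k t| ^ 2 :=
          sq_integral_mul_le_of_nonneg (Eventually.of_forall fun t => Real.sqrt_nonneg _)
            (Eventually.of_forall fun t => abs_nonneg _)
            (hgc.sqrt.memLp_restrict_Ioo 2) (hkc.abs.memLp_restrict_Ioo 2)
      _ = _ := by
          rw [← integral_const_mul ((p + 2) ^ 2 / 4)]
          congr 1 <;> refine setIntegral_congr_fun measurableSet_Ioo fun t ht => ?_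
          · exact Real.sq_sqrt (hpos t (Ioo_subset_Icc_self ht)).le
          · rw [sq_abs, mul_pow, mul_pow, ← Real.rpow_natCast (g t ^ _),
              ← Real.rpow_mul (hpos t (Ioo_subset_Icc_self ht)).le]
            ring_nf
  have hsq : ∀ t ∈ Icc a b, (g t ^ ((p + 2) / 2)) ^ 2 = g t ^ (p + 2) := fun t ht => by
    rw [← Real.rpow_natCast, ← Real.rpow_mul (hpos t ht).le]
    ring_nf
  have hwx : 0 ≤ g x ^ ((p + 2) / 2) := Real.rpow_nonneg (hpos x hx).le _
  rw [← hsq x hx, ← hsq y hy]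
  nlinarith [sq_nonneg (g y ^ ((p + 2) / 2) - J)]

theorem rpow_add_two_le_average_of_hasDerivAt {p a b x : ℝ} {g g' : ℝ → ℝ} (hp : -2 ≤ p)
    (hab : a < b) (hg : ∀ t ∈ Icc a b, HasDerivAt g (g' t) t) (hg' : ContinuousOn g' (Icc a b))
    (hpos : ∀ t ∈ Icc a b, 0 < g t) (hx : x ∈ Icc a b) :
    g x ^ (p + 2) ≤ 2 * ((∫ t in Ioo a b, g t) / (b - a)) ^ (p + 2) +
      (p + 2) ^ 2 / 2 * (∫ t in Ioo a b, g t) * ∫ t in Ioo a b, g t ^ (p - 1) * g' t ^ 2 := by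
  have hgc : ContinuousOn g (Icc a b) := fun t ht => (hg t ht).continuousAt.continuousWithinAt
  obtain ⟨y, hy, hy_le⟩ := exists_le_setAverage (μ := volume) (by simp [hab])
    measure_Ioo_lt_top.ne (hgc.integrableOn_Icc.mono_set Ioo_subset_Icc_self)
  rw [setAverage_eq, Real.volume_real_Ioo_of_le hab.le, smul_eq_mul, inv_mul_eq_div] at hy_le
  have hy' := Ioo_subset_Icc_self hy
  grw [rpow_add_two_le_of_hasDerivAt p hg hg' hpos hx hy',
    Real.rpow_le_rpow (hpos y hy').le hy_le (by linarith)]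

theorem rpow_mul_deriv_sq_le {p r a c : ℝ} (hr : r * (p + 1) = 3) (ha : 0 < a) (hc : 0 < c)
    (u v : ℝ) :
    (a * c ^ r) ^ (p - 1) * (u * c ^ r + a * (v * r * c ^ (r - 1))) ^ 2 ≤
      2 * (a ^ (p - 1) * c ^ 3 * u ^ 2 + r ^ 2 * a ^ (p + 1) * c * v ^ 2) := by
  set C := c ^ r
  set D := C ^ (p - 1)
  have hC : 0 < C := Real.rpow_pos_of_pos hc r
  have hDC : D * C ^ 2 = c ^ 3 := by
    rw [← Real.rpow_natCast, ← Real.rpow_add hC, ← Real.rpow_mul hc.le]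
    norm_num [show r * (p - 1 + 2) = 3 by linear_combination hr]
  have hA : a ^ (p + 1) = a ^ (p - 1) * a ^ 2 := by
    rw [← Real.rpow_natCast, ← Real.rpow_add ha]
    norm_num [sub_add_eq_add_sub, add_sub_assoc]
  rw [Real.mul_rpow ha.le hC.le, Real.rpow_sub_one hc.ne', hA]
  have hAD : 0 ≤ a ^ (p - 1) * D := by positivity
  calc a ^ (p - 1) * D * (u * C + a * (v * r * (C / c))) ^ 2
      ≤ a ^ (p - 1) * D * (2 * (u * C) ^ 2 + 2 * (a * (v * r * (C / c))) ^ 2) :=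
        mul_le_mul_of_nonneg_left (by nlinarith [sq_nonneg (u * C - a * (v * r * (C / c)))]) hAD
    _ = 2 * (a ^ (p - 1) * (D * C ^ 2) * u ^ 2 +
          r ^ 2 * (a ^ (p - 1) * a ^ 2) * (D * C ^ 2 / c ^ 2) * v ^ 2) := by
        ring
    _ = _ := by
        rw [hDC]
        field_simp

theorem two_mul_div_two_rpow_le {x q : ℝ} (hx : 0 ≤ x) (hq : 1 ≤ q) :
    2 * (x / 2) ^ q ≤ x ^ q := by
  have h2 : (2 : ℝ) ≤ 2 ^ q := by
    simpa using Real.rpow_le_rpow_of_exponent_le (by norm_num : (1 : ℝ) ≤ 2) hq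
  rw [Real.div_rpow hx zero_le_two, mul_div_assoc', div_le_iff₀ (by positivity)]
  exact mul_le_mul_of_nonneg_right h2 (by positivity) |>.trans_eq (mul_comm _ _)

section Product

variable {p r a b M : ℝ} {φ ψ : ℝ → ℝ}

theorem setIntegral_mul_rpow_le (hr : 0 ≤ r) (hφ : ContinuousOn φ (Icc a b))
    (hψ : ContinuousOn ψ (Icc a b)) (hφ0 : ∀ t ∈ Icc a b, 0 ≤ φ t)
    (hψ0 : ∀ t ∈ Icc a b, 0 ≤ ψ t) (hψM : ∀ t ∈ Icc a b, ψ t ≤ M) :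
    ∫ t in Ioo a b, φ t * ψ t ^ r ≤ (∫ t in Ioo a b, φ t) * M ^ r := by
  rw [← integral_mul_const]
  have hψr := hψ.rpow_const fun _ _ => Or.inr hr
  refine setIntegral_mono_on ((hφ.mul hψr).integrableOn_Icc.mono_set Ioo_subset_Icc_self)
    ((hφ.integrableOn_Icc.mono_set Ioo_subset_Icc_self).mul_const _) measurableSet_Ioo
    fun t ht => ?_
  have ht' := Ioo_subset_Icc_self ht
  exact mul_le_mul_of_nonneg_left (Real.rpow_le_rpow (hψ0 t ht') (hψM t ht') hr) (hφ0 t ht')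

theorem setIntegral_rpow_mul_deriv_sq_le {φ' ψ' : ℝ → ℝ} (hr : r * (p + 1) = 3)
    (hφ : ContinuousOn φ (Icc a b)) (hψ : ContinuousOn ψ (Icc a b))
    (hφ' : ContinuousOn φ' (Icc a b)) (hψ' : ContinuousOn ψ' (Icc a b))
    (hφpos : ∀ t ∈ Icc a b, 0 < φ t) (hψpos : ∀ t ∈ Icc a b, 0 < ψ t)
    (hψM : ∀ t ∈ Icc a b, ψ t ≤ M) :
    ∫ t in Ioo a b, (φ t * ψ t ^ r) ^ (p - 1) *
        (φ' t * ψ t ^ r + φ t * (ψ' t * r * ψ t ^ (r - 1))) ^ 2 ≤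
      2 * (1 + r ^ 2) * (M ^ 2 * (∫ t in Ioo a b, φ t ^ (p - 1) * ψ t * φ' t ^ 2) +
        ∫ t in Ioo a b, φ t ^ (p + 1) * ψ t * ψ' t ^ 2) := by
  have hφrpow (s : ℝ) : ContinuousOn (fun t => φ t ^ s) (Icc a b) :=
    hφ.rpow_const fun t ht => Or.inl (hφpos t ht).ne'
  have hint₁ : IntegrableOn (fun t => φ t ^ (p - 1) * ψ t * φ' t ^ 2) (Ioo a b) :=
    (((hφrpow (p - 1)).mul hψ).mul (hφ'.pow 2)).integrableOn_Icc.mono_set Ioo_subset_Icc_self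
  have hint₂ : IntegrableOn (fun t => φ t ^ (p + 1) * ψ t * ψ' t ^ 2) (Ioo a b) :=
    (((hφrpow (p + 1)).mul hψ).mul (hψ'.pow 2)).integrableOn_Icc.mono_set Ioo_subset_Icc_self
  rw [← integral_const_mul, ← integral_add (hint₁.const_mul _) hint₂,
    ← integral_const_mul]
  refine integral_mono_of_nonneg ?_ ((hint₁.const_mul _).add hint₂ |>.const_mul _) ?_ <;>
    filter_upwards [ae_restrict_mem measurableSet_Ioo] with t ht <;>
    have hφt := hφpos t (Ioo_subset_Icc_self ht) <;>
    have hψt := hψpos t (Ioo_subset_Icc_self ht)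
  · positivity
  refine (rpow_mul_deriv_sq_le hr hφt hψt _ _).trans ?_
  have hψ3 : ψ t ^ 3 ≤ M ^ 2 * ψ t := by
    nlinarith [mul_le_mul_of_nonneg_right
      (pow_le_pow_left₀ hψt.le (hψM t (Ioo_subset_Icc_self ht)) 2) hψt.le]
  have h₁ : 0 ≤ φ t ^ (p - 1) * φ' t ^ 2 := by positivity
  have h₂ : 0 ≤ φ t ^ (p + 1) * ψ t * ψ' t ^ 2 := by positivity
  nlinarith [mul_nonneg (sq_nonneg r) h₂, mul_le_mul_of_nonneg_left hψ3 h₁,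
    mul_nonneg (mul_nonneg (sq_nonneg r) h₁) hψt.le]

theorem mul_rpow_rpow_add_two_le_average (hp : -2 ≤ p) (hr : r * (p + 1) = 3) (hab : a < b)
    (hφ : ContDiff ℝ 1 φ) (hψ : ContDiff ℝ 1 ψ)
    (hφpos : ∀ t ∈ Icc a b, 0 < φ t) (hψpos : ∀ t ∈ Icc a b, 0 < ψ t)
    (hψM : ∀ t ∈ Icc a b, ψ t ≤ M) {x : ℝ} (hx : x ∈ Icc a b) :
    (φ x * ψ x ^ r) ^ (p + 2) ≤
      2 * ((∫ t in Ioo a b, φ t * ψ t ^ r) / (b - a)) ^ (p + 2) +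
      (p + 2) ^ 2 * (1 + r ^ 2) * (∫ t in Ioo a b, φ t * ψ t ^ r) *
        (M ^ 2 * (∫ t in Ioo a b, φ t ^ (p - 1) * ψ t * deriv φ t ^ 2) +
          ∫ t in Ioo a b, φ t ^ (p + 1) * ψ t * deriv ψ t ^ 2) := by
  have hψr (s : ℝ) : ContinuousOn (fun t => ψ t ^ s) (Icc a b) :=
    hψ.continuous.continuousOn.rpow_const fun t ht => Or.inl (hψpos t ht).ne'
  have hg (t : ℝ) (ht : t ∈ Icc a b) : HasDerivAt (fun s => φ s * ψ s ^ r)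
      (deriv φ t * ψ t ^ r + φ t * (deriv ψ t * r * ψ t ^ (r - 1))) t :=
    (hφ.differentiable one_ne_zero t).hasDerivAt.mul
      ((hψ.differentiable one_ne_zero t).hasDerivAt.rpow_const (Or.inl (hψpos t ht).ne'))
  have hg' : ContinuousOn
      (fun t => deriv φ t * ψ t ^ r + φ t * (deriv ψ t * r * ψ t ^ (r - 1))) (Icc a b) :=
    ((hφ.continuous_deriv le_rfl).continuousOn.mul (hψr r)).add
      (hφ.continuous.continuousOn.mul
        (((hψ.continuous_deriv le_rfl).continuousOn.mul continuousOn_const).mul (hψr (r - 1))))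
  have hgpos (t : ℝ) (ht : t ∈ Icc a b) : 0 < φ t * ψ t ^ r :=
    mul_pos (hφpos t ht) (Real.rpow_pos_of_pos (hψpos t ht) r)
  have hN : 0 ≤ ∫ t in Ioo a b, φ t * ψ t ^ r :=
    setIntegral_nonneg measurableSet_Ioo fun t ht => (hgpos t (Ioo_subset_Icc_self ht)).le
  refine (rpow_add_two_le_average_of_hasDerivAt hp hab hg hg' hgpos hx).trans ?_
  grw [setIntegral_rpow_mul_deriv_sq_le hr hφ.continuous.continuousOn hψ.continuous.continuousOn
    (hφ.continuous_deriv le_rfl).continuousOn (hψ.continuous_deriv le_rfl).continuousOn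
    hφpos hψpos hψM]
  exact le_of_eq (by ring)

theorem mul_rpow_rpow_add_two_le (hp : -1 < p) (hr : r * (p + 1) = 3) (hab : a < b)
    (hφ : ContDiff ℝ 1 φ) (hψ : ContDiff ℝ 1 ψ)
    (hφpos : ∀ t ∈ Icc a b, 0 < φ t) (hψpos : ∀ t ∈ Icc a b, 0 < ψ t)
    (hψM : ∀ t ∈ Icc a b, ψ t ≤ M) {x : ℝ} (hx : x ∈ Icc a b) :
    (φ x * ψ x ^ r) ^ (p + 2) ≤
      ((p + 2) ^ 2 * (1 + r ^ 2) + 1) * (∫ t in Ioo a b, φ t) * M ^ r *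
        (M ^ 2 * (∫ t in Ioo a b, φ t ^ (p - 1) * ψ t * deriv φ t ^ 2) +
          (∫ t in Ioo a b, φ t ^ (p + 1) * ψ t * deriv ψ t ^ 2) +
          (2 / (b - a)) ^ (p + 2) * (∫ t in Ioo a b, φ t) ^ (p + 1) * M ^ 3) := by
  have hIoo : Ioo a b ⊆ Icc a b := Ioo_subset_Icc_self
  have hM : 0 < M := (hψpos x hx).trans_le (hψM x hx)
  have hr0 : 0 < r := by nlinarith
  have hδ : 0 < 2 / (b - a) := div_pos two_pos (sub_pos.2 hab)
  set F := ∫ t in Ioo a b, φ t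
  set N := ∫ t in Ioo a b, φ t * ψ t ^ r
  set I := M ^ 2 * (∫ t in Ioo a b, φ t ^ (p - 1) * ψ t * deriv φ t ^ 2) +
    ∫ t in Ioo a b, φ t ^ (p + 1) * ψ t * deriv ψ t ^ 2
  have hF : 0 ≤ F := setIntegral_nonneg measurableSet_Ioo fun t ht => (hφpos t (hIoo ht)).le
  have hN : 0 ≤ N := setIntegral_nonneg measurableSet_Ioo fun t ht =>
    mul_nonneg (hφpos t (hIoo ht)).le (Real.rpow_nonneg (hψpos t (hIoo ht)).le r)
  have hI : 0 ≤ I := by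
    refine add_nonneg (mul_nonneg (sq_nonneg M) ?_) ?_ <;>
      refine setIntegral_nonneg measurableSet_Ioo fun t ht => ?_ <;>
      have := hφpos t (hIoo ht) <;> have := hψpos t (hIoo ht) <;> positivity
  have hNF : N ≤ F * M ^ r := setIntegral_mul_rpow_le hr0.le hφ.continuous.continuousOn
    hψ.continuous.continuousOn (fun t ht => (hφpos t ht).le) (fun t ht => (hψpos t ht).le) hψM
  -- `r (p + 1) = 3` turns `(F M^r)^(p+2)` into the penalization term
  have hFM : (F * M ^ r) ^ (p + 2) = F * M ^ r * (F ^ (p + 1) * M ^ 3) := by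
    rw [show p + 2 = 1 + (p + 1) by ring, Real.rpow_add' (by positivity) (by linarith),
      Real.rpow_one, Real.mul_rpow hF (by positivity), ← Real.rpow_mul hM.le, hr, Real.rpow_ofNat]
  set K := (p + 2) ^ 2 * (1 + r ^ 2)
  have hK : 0 ≤ K := by positivity
  calc (φ x * ψ x ^ r) ^ (p + 2)
      ≤ 2 * (N / (b - a)) ^ (p + 2) + K * N * I :=
        mul_rpow_rpow_add_two_le_average (by linarith) hr hab hφ hψ hφpos hψpos hψM hx
    _ ≤ (2 / (b - a) * (F * M ^ r)) ^ (p + 2) + K * (F * M ^ r) * I := by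
        rw [show N / (b - a) = 2 / (b - a) * N / 2 by ring]
        have hp2 : 0 ≤ p + 2 := by linarith
        grw [two_mul_div_two_rpow_le (by positivity) (by linarith), hNF]
    _ = (2 / (b - a)) ^ (p + 2) * (F * M ^ r * (F ^ (p + 1) * M ^ 3)) + K * (F * M ^ r) * I := by
        rw [Real.mul_rpow (by positivity) (by positivity), hFM]
    _ ≤ _ := by
        have hP : 0 ≤ F * M ^ r := by positivity
        have hZ : 0 ≤ (2 / (b - a)) ^ (p + 2) * F ^ (p + 1) * M ^ 3 := by positivity
        nlinarith [mul_nonneg hP hI, mul_nonneg (mul_nonneg hK hP) hZ]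

end Product

/-- The key `L^∞` estimate of Lemma 3.2: for positive `C¹` functions `φ, ψ` on
`B_{1/ε} = (-1/ε, 1/ε)`, the quantity `‖φ ψ^{3/(p+1)}‖_∞^{p+2}` is controlled by
the indicated integral quantities, with a constant independent of `ε`. -/
theorem stmt_3 (p : ℝ) (hp : 0 < p) :
    ∃ C > 0, ∀ ε ∈ Set.Ioo (0:ℝ) 1, ∀ φ ψ : ℝ → ℝ,
      ContDiff ℝ 1 φ → ContDiff ℝ 1 ψ →
      (∀ x ∈ Set.Icc (-(1/ε)) (1/ε), 0 < φ x) →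
      (∀ x ∈ Set.Icc (-(1/ε)) (1/ε), 0 < ψ x) →
      (essSup (fun x => φ x * ψ x ^ (3/(p+1)))
          (volume.restrict (Set.Ioo (-(1/ε)) (1/ε)))) ^ (p+2) ≤
        C * (∫ x in Set.Ioo (-(1/ε)) (1/ε), φ x) *
          (essSup ψ (volume.restrict (Set.Ioo (-(1/ε)) (1/ε)))) ^ (3/(p+1)) *
          ((essSup ψ (volume.restrict (Set.Ioo (-(1/ε)) (1/ε)))) ^ (2:ℝ) *
              (∫ x in Set.Ioo (-(1/ε)) (1/ε),
                φ x ^ (p-1) * ψ x * (deriv φ x) ^ 2)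
            + (∫ x in Set.Ioo (-(1/ε)) (1/ε),
                φ x ^ (p+1) * ψ x * (deriv ψ x) ^ 2)
            + ε ^ (p+2) * (∫ x in Set.Ioo (-(1/ε)) (1/ε), φ x) ^ (p+1) *
              (essSup ψ (volume.restrict (Set.Ioo (-(1/ε)) (1/ε)))) ^ (3:ℝ)) := by
  set r := 3 / (p + 1)
  have hr : r * (p + 1) = 3 := div_mul_cancel₀ _ (by positivity)
  refine ⟨(p + 2) ^ 2 * (1 + r ^ 2) + 1, by positivity, ?_⟩
  rintro ε ⟨hε, -⟩ φ ψ hφ hψ hφpos hψpos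
  have hab : -(1 / ε) < 1 / ε := neg_lt_self (by positivity)
  have hψc := hψ.continuous.continuousOn (s := Icc (-(1 / ε)) (1 / ε))
  have hgc : ContinuousOn (fun t => φ t * ψ t ^ r) (Icc (-(1 / ε)) (1 / ε)) :=
    hφ.continuous.continuousOn.mul (hψc.rpow_const fun t ht => Or.inl (hψpos t ht).ne')
  obtain ⟨x, hx, hS⟩ := hgc.exists_essSup_restrict_Ioo_eq hab
  have hlen : 2 / (1 / ε - -(1 / ε)) = ε := by field_simp; ring
  rw [hS, Real.rpow_two, Real.rpow_ofNat]
  simpa only [hlen] using mul_rpow_rpow_add_two_le (by linarith) hr hab hφ hψ hφpos hψpos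
    (fun t ht => hψc.le_essSup_restrict_Ioo hab ht) hx
end

section
/- Let I be a bounded interval and v ∈ C²(closure I) positive with v_x = 0 on ∂I. Then ∫_I v_xx²/v ≥ (4/9) ∫_I v_x⁴/v³. -/
open MeasureTheory Set

/-! For `v > 0` and `w := v_xx - (2/3) v_x² / v`,
`v_xx² / v - (4/9) v_x⁴ / v³ = w² / v + (4/9) (v_x³ / v²)_x`.
The Neumann condition kills the integral of the exact derivative, and `w² / v ≥ 0`. -/

theorem HasDerivAt.cube_div_sq {v v' : ℝ → ℝ} {x w : ℝ} (hv : HasDerivAt v (v' x) x)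
    (hv' : HasDerivAt v' w x) (hx : v x ≠ 0) :
    HasDerivAt (fun y => v' y ^ 3 / v y ^ 2)
      (3 * v' x ^ 2 * w / v x ^ 2 - 2 * v' x ^ 4 / v x ^ 3) x := by
  refine ((hv'.fun_pow 3).fun_div (hv.fun_pow 2) (pow_ne_zero 2 hx)).congr_deriv ?_
  field_simp
  ring

theorem four_ninths_mul_add_le_sq_div {p q r : ℝ} (hr : 0 < r) :
    4 / 9 * (p ^ 4 / r ^ 3 + (3 * p ^ 2 * q / r ^ 2 - 2 * p ^ 4 / r ^ 3)) ≤ q ^ 2 / r := by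
  have key : q ^ 2 / r - 4 / 9 * (p ^ 4 / r ^ 3 + (3 * p ^ 2 * q / r ^ 2 - 2 * p ^ 4 / r ^ 3))
      = (q - 2 / 3 * p ^ 2 / r) ^ 2 / r := by
    field_simp
    ring
  have : 0 ≤ (q - 2 / 3 * p ^ 2 / r) ^ 2 / r := by positivity
  linarith

theorem setIntegral_Ioo_eq_sub_of_hasDerivAt {a b : ℝ} (hab : a ≤ b) {F f : ℝ → ℝ}
    (hF : ∀ x ∈ Icc a b, HasDerivAt F (f x) x) (hf : ContinuousOn f (Icc a b)) :
    ∫ x in Ioo a b, f x = F b - F a := by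
  rw [← integral_Ioc_eq_integral_Ioo, ← intervalIntegral.integral_of_le hab]
  rw [← uIcc_of_le hab] at hF hf
  exact intervalIntegral.integral_eq_sub_of_hasDerivAt hF hf.intervalIntegrable

/-- For `v ∈ C²([a,b])` positive with homogeneous Neumann boundary conditions,
`∫ v_xx²/v ≥ (4/9) ∫ v_x⁴/v³`. -/
theorem stmt_14 (a b : ℝ) (hab : a < b) (v v' v'' : ℝ → ℝ)
    (hv : ∀ x ∈ Set.Icc a b, HasDerivAt v (v' x) x)
    (hv' : ∀ x ∈ Set.Icc a b, HasDerivAt v' (v'' x) x)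
    (hv''c : ContinuousOn v'' (Set.Icc a b))
    (hvpos : ∀ x ∈ Set.Icc a b, 0 < v x)
    (hNa : v' a = 0) (hNb : v' b = 0) :
    (4/9) * (∫ x in Set.Ioo a b, (v' x) ^ 4 / (v x) ^ 3) ≤
      ∫ x in Set.Ioo a b, (v'' x) ^ 2 / v x := by
  have hvc : ContinuousOn v (Icc a b) := fun x hx => (hv x hx).continuousAt.continuousWithinAt
  have hv'c : ContinuousOn v' (Icc a b) := fun x hx => (hv' x hx).continuousAt.continuousWithinAt
  have hv0 : ∀ x ∈ Icc a b, v x ≠ 0 := fun x hx => (hvpos x hx).ne'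
  set g := fun x => 3 * v' x ^ 2 * v'' x / v x ^ 2 - 2 * v' x ^ 4 / v x ^ 3
  have hgc : ContinuousOn g (Icc a b) := by
    refine ((continuousOn_const.mul (hv'c.pow 2)).mul hv''c |>.div (hvc.pow 2) ?_).sub
      ((continuousOn_const.mul (hv'c.pow 4)).div (hvc.pow 3) ?_) <;>
    exact fun x hx => pow_ne_zero _ (hv0 x hx)
  have hg : ∫ x in Ioo a b, g x = 0 := by
    rw [setIntegral_Ioo_eq_sub_of_hasDerivAt hab.le
      (fun x hx => (hv x hx).cube_div_sq (hv' x hx) (hv0 x hx)) hgc, hNa, hNb]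
    simp
  have hIoo : ∀ {f : ℝ → ℝ}, ContinuousOn f (Icc a b) → IntegrableOn f (Ioo a b) :=
    fun hf => hf.integrableOn_Icc.mono_set Ioo_subset_Icc_self
  have hf3c : ContinuousOn (fun x => v' x ^ 4 / v x ^ 3) (Icc a b) :=
    (hv'c.pow 4).div (hvc.pow 3) fun x hx => pow_ne_zero _ (hv0 x hx)
  have hf1c : ContinuousOn (fun x => v'' x ^ 2 / v x) (Icc a b) := (hv''c.pow 2).div hvc hv0
  calc 4 / 9 * ∫ x in Ioo a b, v' x ^ 4 / v x ^ 3
      = ∫ x in Ioo a b, 4 / 9 * (v' x ^ 4 / v x ^ 3 + g x) := by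
        rw [integral_const_mul, integral_add (hIoo hf3c) (hIoo hgc), hg, add_zero]
    _ ≤ ∫ x in Ioo a b, v'' x ^ 2 / v x :=
        setIntegral_mono_on (hIoo (continuousOn_const.mul (hf3c.add hgc))) (hIoo hf1c)
          measurableSet_Ioo fun x hx =>
            four_ninths_mul_add_le_sq_div (hvpos x (Ioo_subset_Icc_self hx))
end

section
/- Let I be a bounded interval, u ∈ C¹(closure I) nonnegative, v ∈ C¹(closure I) positive, φ ∈ C¹_c(I) with 0 ≤ φ ≤ 1, and p ≥ 2. Then ( ∫_I |(u^{(p+1)/2} v)_x| φ² )² ≤ ((p+1)²/2) (∫_I v φ²)(∫_I u^{p−1} v u_x² φ²) + 2 (∫_I u^p v φ²)(∫_I (u/v) v_x² φ²). -/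
/-!
By the product and chain rules, pointwise
`|(u^{(p+1)/2} v)_x| φ² ≤ ((p+1)/2) √(v φ² · u^{p-1} v u_x² φ²) + √(u^p v φ² · (u/v) v_x² φ²)`,
where each radicand is the product of the two integrands of one term on the right.
Integrating, squaring with `(a + b)² ≤ 2a² + 2b²`, and applying Cauchy–Schwarz in the form
`(∫ √(F G))² ≤ (∫ F)(∫ G)` to each term gives the inequality.
-/

open MeasureTheory Set

section CauchySchwarz

variable {α : Type*} [MeasurableSpace α] {μ : Measure α} {F G : α → ℝ}

theorem memLp_two_sqrt (hF : Integrable F μ) (hF0 : 0 ≤ᵐ[μ] F) :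
    MemLp (fun x => √(F x)) 2 μ := by
  have hmeas : AEStronglyMeasurable (fun x => √(F x)) μ :=
    Real.continuous_sqrt.comp_aestronglyMeasurable hF.aestronglyMeasurable
  refine (memLp_two_iff_integrable_sq hmeas).2 (hF.congr ?_)
  filter_upwards [hF0] with x hx using (Real.sq_sqrt hx).symm

theorem sqrt_mul_ae_eq (hF0 : 0 ≤ᵐ[μ] F) :
    (fun x => √(F x * G x)) =ᵐ[μ] fun x => √(F x) * √(G x) := by
  filter_upwards [hF0] with x hx using Real.sqrt_mul hx _

theorem MeasureTheory.Integrable.sqrt_mul (hF : Integrable F μ) (hG : Integrable G μ)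
    (hF0 : 0 ≤ᵐ[μ] F) (hG0 : 0 ≤ᵐ[μ] G) : Integrable (fun x => √(F x * G x)) μ :=
  ((memLp_two_sqrt hF hF0).integrable_mul (memLp_two_sqrt hG hG0)).congr
    (sqrt_mul_ae_eq hF0).symm

theorem sq_integral_sqrt_mul_le (hF : Integrable F μ) (hG : Integrable G μ)
    (hF0 : 0 ≤ᵐ[μ] F) (hG0 : 0 ≤ᵐ[μ] G) :
    (∫ x, √(F x * G x) ∂μ) ^ 2 ≤ (∫ x, F x ∂μ) * ∫ x, G x ∂μ := by
  have h2 : ENNReal.ofReal 2 = 2 := by norm_num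
  have holder := integral_mul_le_Lp_mul_Lq_of_nonneg Real.HolderConjugate.two_two
    (ae_of_all μ fun x => Real.sqrt_nonneg (F x)) (ae_of_all μ fun x => Real.sqrt_nonneg (G x))
    (h2 ▸ memLp_two_sqrt hF hF0) (h2 ▸ memLp_two_sqrt hG hG0)
  have hsq : ∀ {H : α → ℝ}, 0 ≤ᵐ[μ] H → ∫ x, √(H x) ^ (2 : ℝ) ∂μ = ∫ x, H x ∂μ := fun hH0 =>
    integral_congr_ae (by filter_upwards [hH0] with x hx using by simp [Real.sq_sqrt hx])
  rw [hsq hF0, hsq hG0, ← integral_congr_ae (sqrt_mul_ae_eq hF0)] at holder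
  calc (∫ x, √(F x * G x) ∂μ) ^ 2
      ≤ ((∫ x, F x ∂μ) ^ (1 / 2 : ℝ) * (∫ x, G x ∂μ) ^ (1 / 2 : ℝ)) ^ 2 :=
        pow_le_pow_left₀ (integral_nonneg fun x => Real.sqrt_nonneg _) holder 2
    _ = (∫ x, F x ∂μ) * ∫ x, G x ∂μ := by
        rw [mul_pow, ← Real.sqrt_eq_rpow, ← Real.sqrt_eq_rpow,
          Real.sq_sqrt (integral_nonneg_of_ae hF0), Real.sq_sqrt (integral_nonneg_of_ae hG0)]

theorem sq_integral_le_of_le_add_sqrt_mul {f A₁ B₁ A₂ B₂ : α → ℝ} {c : ℝ}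
    (hA₁ : Integrable A₁ μ) (hB₁ : Integrable B₁ μ) (hA₂ : Integrable A₂ μ)
    (hB₂ : Integrable B₂ μ) (hA₁0 : 0 ≤ᵐ[μ] A₁) (hB₁0 : 0 ≤ᵐ[μ] B₁) (hA₂0 : 0 ≤ᵐ[μ] A₂)
    (hB₂0 : 0 ≤ᵐ[μ] B₂) (hf0 : 0 ≤ᵐ[μ] f)
    (hf : ∀ᵐ x ∂μ, f x ≤ c * √(A₁ x * B₁ x) + √(A₂ x * B₂ x)) :
    (∫ x, f x ∂μ) ^ 2 ≤
      2 * c ^ 2 * (∫ x, A₁ x ∂μ) * (∫ x, B₁ x ∂μ) + 2 * (∫ x, A₂ x ∂μ) * ∫ x, B₂ x ∂μ := by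
  have hI₁ := hA₁.sqrt_mul hB₁ hA₁0 hB₁0
  have hI₂ := hA₂.sqrt_mul hB₂ hA₂0 hB₂0
  have hle : ∫ x, f x ∂μ ≤ c * ∫ x, √(A₁ x * B₁ x) ∂μ + ∫ x, √(A₂ x * B₂ x) ∂μ := by
    rw [← integral_const_mul, ← integral_add (hI₁.const_mul c) hI₂]
    exact integral_mono_of_nonneg hf0 ((hI₁.const_mul c).add hI₂) hf
  have hCS₁ := mul_le_mul_of_nonneg_left (sq_integral_sqrt_mul_le hA₁ hB₁ hA₁0 hB₁0)
    (by positivity : 0 ≤ 2 * c ^ 2)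
  have hCS₂ := sq_integral_sqrt_mul_le hA₂ hB₂ hA₂0 hB₂0
  calc (∫ x, f x ∂μ) ^ 2
      ≤ (c * ∫ x, √(A₁ x * B₁ x) ∂μ + ∫ x, √(A₂ x * B₂ x) ∂μ) ^ 2 :=
        pow_le_pow_left₀ (integral_nonneg_of_ae hf0) hle 2
    _ ≤ 2 * ((c * ∫ x, √(A₁ x * B₁ x) ∂μ) ^ 2 + (∫ x, √(A₂ x * B₂ x) ∂μ) ^ 2) := add_sq_le
    _ ≤ _ := by linarith

end CauchySchwarz

section Pointwise

variable {U U' V V' φ p : ℝ}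

theorem sqrt_mul_rpow_sub_one_eq (hU : 0 ≤ U) (hV : 0 ≤ V) :
    √(V * φ ^ 2 * (U ^ (p - 1) * V * U' ^ 2 * φ ^ 2)) =
      U ^ ((p - 1) / 2) * V * |U'| * φ ^ 2 := by
  have hsq : U ^ (p - 1) = (U ^ ((p - 1) / 2)) ^ 2 := by
    rw [← Real.rpow_natCast, ← Real.rpow_mul hU]; norm_num
  rw [← Real.sqrt_sq (by positivity : 0 ≤ U ^ ((p - 1) / 2) * V * |U'| * φ ^ 2), hsq,
    ← sq_abs U']
  ring_nf

theorem sqrt_rpow_mul_div_eq (hp : 0 < p + 1) (hU : 0 ≤ U) (hV : 0 < V) :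
    √(U ^ p * V * φ ^ 2 * (U / V * V' ^ 2 * φ ^ 2)) = U ^ ((p + 1) / 2) * |V'| * φ ^ 2 := by
  have hsq : U ^ p * U = (U ^ ((p + 1) / 2)) ^ 2 := by
    rw [← Real.rpow_add_one' hU hp.ne', ← Real.rpow_natCast, ← Real.rpow_mul hU]; norm_num
  rw [← Real.sqrt_sq (by positivity : 0 ≤ U ^ ((p + 1) / 2) * |V'| * φ ^ 2), mul_pow, mul_pow,
    ← hsq, sq_abs]
  congr 1
  field_simp

theorem abs_deriv_rpow_mul_mul_sq_le (hp : 0 < p + 1) (hU : 0 ≤ U) (hV : 0 < V) :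
    |U' * ((p + 1) / 2) * U ^ ((p + 1) / 2 - 1) * V + U ^ ((p + 1) / 2) * V'| * φ ^ 2 ≤
      (p + 1) / 2 * √(V * φ ^ 2 * (U ^ (p - 1) * V * U' ^ 2 * φ ^ 2)) +
        √(U ^ p * V * φ ^ 2 * (U / V * V' ^ 2 * φ ^ 2)) := by
  rw [sqrt_mul_rpow_sub_one_eq hU hV.le, sqrt_rpow_mul_div_eq hp hU hV,
    show (p + 1) / 2 - 1 = (p - 1) / 2 by ring]
  have hc : 0 ≤ (p + 1) / 2 := by positivity
  calc _ ≤ (|U' * ((p + 1) / 2) * U ^ ((p - 1) / 2) * V| + |U ^ ((p + 1) / 2) * V'|) * φ ^ 2 :=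
        mul_le_mul_of_nonneg_right (abs_add_le _ _) (sq_nonneg φ)
    _ = _ := by
        simp only [abs_mul, abs_of_nonneg hc, abs_of_nonneg hV.le,
          abs_of_nonneg (Real.rpow_nonneg hU _)]
        ring

end Pointwise

theorem stmt_16_general (a b : ℝ) (p : ℝ) (hp : 2 ≤ p)
    (u u' v v' φ φ' : ℝ → ℝ)
    (hu : ∀ x ∈ Set.Icc a b, HasDerivAt u (u' x) x)
    (hu'c : ContinuousOn u' (Set.Icc a b))
    (hunn : ∀ x ∈ Set.Icc a b, 0 ≤ u x)
    (hv : ∀ x ∈ Set.Icc a b, HasDerivAt v (v' x) x)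
    (hv'c : ContinuousOn v' (Set.Icc a b))
    (hvpos : ∀ x ∈ Set.Icc a b, 0 < v x)
    (hφ : ∀ x : ℝ, HasDerivAt φ (φ' x) x) :
    (∫ x in Set.Ioo a b,
        |deriv (fun y => u y ^ ((p+1)/2) * v y) x| * (φ x) ^ 2) ^ 2 ≤
      ((p+1) ^ 2 / 2) * (∫ x in Set.Ioo a b, v x * (φ x) ^ 2) *
          (∫ x in Set.Ioo a b, u x ^ (p-1) * v x * (u' x) ^ 2 * (φ x) ^ 2)
        + 2 * (∫ x in Set.Ioo a b, u x ^ p * v x * (φ x) ^ 2) *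
          (∫ x in Set.Ioo a b, (u x / v x) * (v' x) ^ 2 * (φ x) ^ 2) := by
  have huc : ContinuousOn u (Icc a b) := fun x hx => (hu x hx).continuousAt.continuousWithinAt
  have hvc : ContinuousOn v (Icc a b) := fun x hx => (hv x hx).continuousAt.continuousWithinAt
  have hφ2 : ContinuousOn (fun x => φ x ^ 2) (Icc a b) :=
    ((continuous_iff_continuousAt.2 fun x => (hφ x).continuousAt).pow 2).continuousOn
  have hint {F : ℝ → ℝ} (hF : ContinuousOn F (Icc a b)) : IntegrableOn F (Ioo a b) :=
    hF.integrableOn_Icc.mono_set Ioo_subset_Icc_self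
  have hae {P : ℝ → Prop} (hP : ∀ x ∈ Icc a b, P x) : ∀ᵐ x ∂volume.restrict (Ioo a b), P x :=
    (ae_restrict_mem measurableSet_Ioo).mono fun x hx => hP x (Ioo_subset_Icc_self hx)
  rw [show (p + 1) ^ 2 / 2 = 2 * ((p + 1) / 2) ^ 2 by ring]
  refine sq_integral_le_of_le_add_sqrt_mul
    (hint (hvc.mul hφ2))
    (hint ((((huc.rpow_const fun _ _ => Or.inr (by linarith)).mul hvc).mul (hu'c.pow 2)).mul
      hφ2))
    (hint (((huc.rpow_const fun _ _ => Or.inr (by linarith)).mul hvc).mul hφ2))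
    (hint (((huc.div hvc fun x hx => (hvpos x hx).ne').mul (hv'c.pow 2)).mul hφ2))
    (hae fun x hx => by have := hvpos x hx; positivity)
    (hae fun x hx => by have := hunn x hx; have := hvpos x hx; positivity)
    (hae fun x hx => by have := hunn x hx; have := hvpos x hx; positivity)
    (hae fun x hx => by have := hunn x hx; have := hvpos x hx; positivity)
    (ae_of_all _ fun x => by positivity)
    (hae fun x hx => ?_)
  rw [(((hu x hx).rpow_const (Or.inr (by linarith))).fun_mul (hv x hx)).deriv]
  exact abs_deriv_rpow_mul_mul_sq_le (by linarith) (hunn x hx) (hvpos x hx)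

/-- Inequality (4.22): for `u ≥ 0`, `v > 0` of class `C¹` on a bounded
interval and a cutoff `φ` with `0 ≤ φ ≤ 1` compactly supported in `I`,
`(∫ |(u^{(p+1)/2} v)_x| φ²)² ≤ ((p+1)²/2)(∫ v φ²)(∫ u^{p−1} v u_x² φ²)
  + 2 (∫ u^p v φ²)(∫ (u/v) v_x² φ²)`. -/
theorem stmt_16 (a b : ℝ) (hab : a < b) (p : ℝ) (hp : 2 ≤ p)
    (u u' v v' φ φ' : ℝ → ℝ)
    (hu : ∀ x ∈ Set.Icc a b, HasDerivAt u (u' x) x)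
    (hu'c : ContinuousOn u' (Set.Icc a b))
    (hunn : ∀ x ∈ Set.Icc a b, 0 ≤ u x)
    (hv : ∀ x ∈ Set.Icc a b, HasDerivAt v (v' x) x)
    (hv'c : ContinuousOn v' (Set.Icc a b))
    (hvpos : ∀ x ∈ Set.Icc a b, 0 < v x)
    (hφ : ∀ x : ℝ, HasDerivAt φ (φ' x) x)
    (hφ'c : Continuous φ')
    (hφsupp : tsupport φ ⊆ Set.Ioo a b)
    (hφ01 : ∀ x : ℝ, φ x ∈ Set.Icc (0:ℝ) 1) :
    (∫ x in Set.Ioo a b,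
        |deriv (fun y => u y ^ ((p+1)/2) * v y) x| * (φ x) ^ 2) ^ 2 ≤
      ((p+1) ^ 2 / 2) * (∫ x in Set.Ioo a b, v x * (φ x) ^ 2) *
          (∫ x in Set.Ioo a b, u x ^ (p-1) * v x * (u' x) ^ 2 * (φ x) ^ 2)
        + 2 * (∫ x in Set.Ioo a b, u x ^ p * v x * (φ x) ^ 2) *
          (∫ x in Set.Ioo a b, (u x / v x) * (v' x) ^ 2 * (φ x) ^ 2) :=
  stmt_16_general a b p hp u u' v v' φ φ' hu hu'c hunn hv hv'c hvpos hφ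
end

section
/- Let I be a bounded interval, v ∈ C¹([0,T] × closure I) positive solving v_t = v_xx − u v classically with u ≥ 0 continuous and v_x = 0 on ∂I, and let φ ∈ C²_c(I), 0 ≤ φ ≤ 1. Then for all t, (d/dt) ∫_I ln(M/v) φ² + (1/2) ∫_I (v_x²/v²) φ² ≤ 2 ∫_I φ_x² + ∫_I u φ², where M is any constant with v ≤ M. -/
open MeasureTheory Set Function

/-!
Differentiating under the integral sign and using the equation,
`-(d/dt) ∫ ln v φ² = -∫ (v_xx / v) φ² + ∫ u φ²`. Integrating `(v_x / v) φ²` by parts turns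
`-∫ (v_xx / v) φ²` into `-∫ (v_x / v)² φ² + ∫ (v_x / v) 2 φ φ_x`, and Young's inequality
`2 (v_x / v) φ φ_x ≤ (1/2) (v_x / v)² φ² + 2 φ_x²` absorbs the mixed term. Differentiating under the
integral needs a uniform bound on `u - v_xx / v`, which comes from the joint continuity of `v`:
the equation makes `v` Lipschitz in time, uniformly in space.
-/

theorem continuousOn_uncurry_of_hasDerivWithinAt_le {v v' : ℝ → ℝ → ℝ} {s t : Set ℝ} {C : ℝ}
    (hs : Convex ℝ s) (hcont : ∀ τ ∈ s, ContinuousOn (v τ) t)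
    (hderiv : ∀ τ ∈ s, ∀ x ∈ t, HasDerivWithinAt (v · x) (v' τ x) s τ)
    (hbound : ∀ τ ∈ s, ∀ x ∈ t, |v' τ x| ≤ C) :
    ContinuousOn (uncurry v) (s ×ˢ t) :=
  continuousOn_prod_of_continuousOn_lipschitzOnWith _ C.toNNReal hcont fun x hx =>
    hs.lipschitzOnWith_of_nnnorm_hasDerivWithin_le (fun τ hτ => hderiv τ hτ x hx) fun τ hτ => by
      rw [← NNReal.coe_le_coe, coe_nnnorm, Real.coe_toNNReal', Real.norm_eq_abs]
      exact le_max_of_le_left (hbound τ hτ x hx)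

theorem continuousOn_uncurry_of_hasDerivWithinAt_sub_mul {u v w : ℝ → ℝ → ℝ} {s t : Set ℝ}
    {M : ℝ} (hs : Convex ℝ s) (hst : IsCompact (s ×ˢ t)) (hu : ContinuousOn (uncurry u) (s ×ˢ t))
    (hw : ContinuousOn (uncurry w) (s ×ˢ t)) (hcont : ∀ τ ∈ s, ContinuousOn (v τ) t)
    (hM : ∀ τ ∈ s, ∀ x ∈ t, |v τ x| ≤ M)
    (hderiv : ∀ τ ∈ s, ∀ x ∈ t, HasDerivWithinAt (v · x) (w τ x - u τ x * v τ x) s τ) :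
    ContinuousOn (uncurry v) (s ×ˢ t) := by
  obtain ⟨Cw, hCw⟩ := hst.exists_bound_of_continuousOn hw
  obtain ⟨Cu, hCu⟩ := hst.exists_bound_of_continuousOn hu
  refine continuousOn_uncurry_of_hasDerivWithinAt_le hs hcont hderiv (C := Cw + Cu * M)
    fun τ hτ x hx => ?_
  have hw_le : |w τ x| ≤ Cw := hCw (τ, x) ⟨hτ, hx⟩
  have hu_le : |u τ x| ≤ Cu := hCu (τ, x) ⟨hτ, hx⟩
  calc |w τ x - u τ x * v τ x| ≤ |w τ x| + |u τ x| * |v τ x| := by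
        rw [← abs_mul]; exact abs_sub _ _
    _ ≤ Cw + Cu * M := by
        gcongr
        · exact (abs_nonneg _).trans hu_le
        · exact hM τ hτ x hx

theorem hasDerivAt_setIntegral_Ioo_of_continuousOn {F F' : ℝ → ℝ → ℝ} {a b t₀ t₁ t : ℝ}
    (ht : t ∈ Ioo t₀ t₁) (hF : ∀ s ∈ Ioo t₀ t₁, ContinuousOn (F s) (Icc a b))
    (hF' : ContinuousOn (uncurry F') (Icc t₀ t₁ ×ˢ Icc a b))
    (hderiv : ∀ s ∈ Ioo t₀ t₁, ∀ x ∈ Icc a b, HasDerivAt (F · x) (F' s x) s) :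
    HasDerivAt (fun s => ∫ x in Ioo a b, F s x) (∫ x in Ioo a b, F' t x) t := by
  obtain ⟨C, hC⟩ := (isCompact_Icc.prod isCompact_Icc).exists_bound_of_continuousOn hF'
  have hF't : ContinuousOn (F' t) (Icc a b) := hF'.uncurry_left t (Ioo_subset_Icc_self ht)
  refine (hasDerivAt_integral_of_dominated_loc_of_deriv_le (bound := fun _ => C)
    (isOpen_Ioo.mem_nhds ht) ?_ ?_ ?_ ?_ (integrableOn_const measure_Ioo_lt_top.ne) ?_).2
  · filter_upwards [isOpen_Ioo.mem_nhds ht] with s hs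
    exact ((hF s hs).mono Ioo_subset_Icc_self).aestronglyMeasurable measurableSet_Ioo
  · exact (hF t ht).integrableOn_Icc.mono_set Ioo_subset_Icc_self
  · exact (hF't.mono Ioo_subset_Icc_self).aestronglyMeasurable measurableSet_Ioo
  · filter_upwards [ae_restrict_mem measurableSet_Ioo] with x hx s hs
    exact hC (s, x) ⟨Ioo_subset_Icc_self hs, Ioo_subset_Icc_self hx⟩
  · filter_upwards [ae_restrict_mem measurableSet_Ioo] with x hx s hs
    exact hderiv s hs x (Ioo_subset_Icc_self hx)

theorem HasDerivAt.log_const_div {f : ℝ → ℝ} {f' M x : ℝ} (hf : HasDerivAt f f' x)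
    (hx : f x ≠ 0) (hM : M ≠ 0) :
    HasDerivAt (fun y => Real.log (M / f y)) (-(f' / f x)) x := by
  refine (((hasDerivAt_const x M).div hf hx).log (div_ne_zero hM hx)).congr_deriv ?_
  simp only [Pi.div_apply]
  field_simp
  ring

section IntegrationByParts

variable {a b : ℝ} {f f' f'' φ φ' : ℝ → ℝ}

theorem setIntegral_Ioo_div_mul_sq_eq (hab : a ≤ b)
    (hf : ∀ x ∈ Icc a b, HasDerivAt f (f' x) x) (hf' : ∀ x ∈ Icc a b, HasDerivAt f' (f'' x) x)
    (hf''c : ContinuousOn f'' (Icc a b)) (hf0 : ∀ x ∈ Icc a b, f x ≠ 0)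
    (hφ : ∀ x ∈ Icc a b, HasDerivAt φ (φ' x) x) (hφ'c : ContinuousOn φ' (Icc a b))
    (hφa : φ a = 0) (hφb : φ b = 0) :
    ∫ x in Ioo a b, f'' x / f x * φ x ^ 2 =
      (∫ x in Ioo a b, f' x ^ 2 / f x ^ 2 * φ x ^ 2)
        - ∫ x in Ioo a b, f' x / f x * (2 * φ x * φ' x) := by
  have hfc := HasDerivAt.continuousOn hf
  have hf'c := HasDerivAt.continuousOn hf'
  have hφc := HasDerivAt.continuousOn hφ
  have hAc : ContinuousOn (fun x => f'' x / f x * φ x ^ 2) (Icc a b) :=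
    (hf''c.div hfc hf0).mul (hφc.pow 2)
  have hBc : ContinuousOn (fun x => f' x ^ 2 / f x ^ 2 * φ x ^ 2) (Icc a b) :=
    ((hf'c.pow 2).div (hfc.pow 2) fun x hx => pow_ne_zero 2 (hf0 x hx)).mul (hφc.pow 2)
  have hCc : ContinuousOn (fun x => f' x / f x * (2 * φ x * φ' x)) (Icc a b) :=
    (hf'c.div hfc hf0).mul ((continuousOn_const.mul hφc).mul hφ'c)
  have hint {g : ℝ → ℝ} (hg : ContinuousOn g (Icc a b)) : IntegrableOn g (Ioo a b) :=
    hg.integrableOn_Icc.mono_set Ioo_subset_Icc_self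
  have hg : ∀ x ∈ uIcc a b, HasDerivAt (fun y => f' y / f y * φ y ^ 2)
      (f'' x / f x * φ x ^ 2 - f' x ^ 2 / f x ^ 2 * φ x ^ 2 + f' x / f x * (2 * φ x * φ' x)) x := by
    intro x hx
    rw [uIcc_of_le hab] at hx
    refine (((hf' x hx).div (hf x hx) (hf0 x hx)).mul ((hφ x hx).pow 2)).congr_deriv ?_
    have hfx := hf0 x hx
    simp only [Pi.div_apply, Pi.pow_apply]
    field_simp
    ring
  have hg'0 : ∫ x in Ioo a b,
      (f'' x / f x * φ x ^ 2 - f' x ^ 2 / f x ^ 2 * φ x ^ 2 + f' x / f x * (2 * φ x * φ' x))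
        = 0 := by
    rw [← integral_Ioc_eq_integral_Ioo, ← intervalIntegral.integral_of_le hab,
      intervalIntegral.integral_eq_sub_of_hasDerivAt hg
        (ContinuousOn.intervalIntegrable (by rw [uIcc_of_le hab]; exact (hAc.sub hBc).add hCc))]
    simp [hφa, hφb]
  have hAB : IntegrableOn (fun x => f'' x / f x * φ x ^ 2 - f' x ^ 2 / f x ^ 2 * φ x ^ 2)
      (Ioo a b) := hint (hAc.sub hBc)
  rw [integral_add hAB (hint hCc), integral_sub (hint hAc) (hint hBc)] at hg'0
  linarith

theorem half_setIntegral_Ioo_sq_div_mul_sq_le (hab : a ≤ b)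
    (hf : ∀ x ∈ Icc a b, HasDerivAt f (f' x) x) (hf' : ∀ x ∈ Icc a b, HasDerivAt f' (f'' x) x)
    (hf''c : ContinuousOn f'' (Icc a b)) (hf0 : ∀ x ∈ Icc a b, f x ≠ 0)
    (hφ : ∀ x ∈ Icc a b, HasDerivAt φ (φ' x) x) (hφ'c : ContinuousOn φ' (Icc a b))
    (hφa : φ a = 0) (hφb : φ b = 0) :
    1 / 2 * (∫ x in Ioo a b, f' x ^ 2 / f x ^ 2 * φ x ^ 2) ≤
      2 * (∫ x in Ioo a b, φ' x ^ 2) + ∫ x in Ioo a b, f'' x / f x * φ x ^ 2 := by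
  have hfc := HasDerivAt.continuousOn hf
  have hf'c := HasDerivAt.continuousOn hf'
  have hφc := HasDerivAt.continuousOn hφ
  have hint {g : ℝ → ℝ} (hg : ContinuousOn g (Icc a b)) : IntegrableOn g (Ioo a b) :=
    hg.integrableOn_Icc.mono_set Ioo_subset_Icc_self
  have hB : IntegrableOn (fun x => f' x ^ 2 / f x ^ 2 * φ x ^ 2) (Ioo a b) :=
    hint (((hf'c.pow 2).div (hfc.pow 2) fun x hx => pow_ne_zero 2 (hf0 x hx)).mul (hφc.pow 2))
  have hC : IntegrableOn (fun x => f' x / f x * (2 * φ x * φ' x)) (Ioo a b) :=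
    hint ((hf'c.div hfc hf0).mul ((continuousOn_const.mul hφc).mul hφ'c))
  have hφ' : IntegrableOn (fun x => φ' x ^ 2) (Ioo a b) := hint (hφ'c.pow 2)
  have young : ∫ x in Ioo a b, f' x / f x * (2 * φ x * φ' x) ≤
      1 / 2 * (∫ x in Ioo a b, f' x ^ 2 / f x ^ 2 * φ x ^ 2) + 2 * ∫ x in Ioo a b, φ' x ^ 2 := by
    rw [← integral_const_mul, ← integral_const_mul,
      ← integral_add (hB.const_mul _) (hφ'.const_mul _)]
    refine setIntegral_mono_on hC ((hB.const_mul _).add (hφ'.const_mul _)) measurableSet_Ioo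
      fun x _ => ?_
    rw [← div_pow]
    nlinarith [sq_nonneg (f' x / f x * φ x - 2 * φ' x)]
  rw [setIntegral_Ioo_div_mul_sq_eq hab hf hf' hf''c hf0 hφ hφ'c hφa hφb]
  linarith

end IntegrationByParts

theorem hasDerivAt_setIntegral_log_const_div_mul_sq {u v w : ℝ → ℝ → ℝ} {φ : ℝ → ℝ}
    {a b t₀ t₁ t M : ℝ} (ht : t ∈ Ioo t₀ t₁) (hM : M ≠ 0)
    (hu : ContinuousOn (uncurry u) (Icc t₀ t₁ ×ˢ Icc a b))
    (hw : ContinuousOn (uncurry w) (Icc t₀ t₁ ×ˢ Icc a b))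
    (hv : ContinuousOn (uncurry v) (Icc t₀ t₁ ×ˢ Icc a b))
    (hv0 : ∀ s ∈ Icc t₀ t₁, ∀ x ∈ Icc a b, v s x ≠ 0) (hφ : ContinuousOn φ (Icc a b))
    (hderiv : ∀ s ∈ Ioo t₀ t₁, ∀ x ∈ Icc a b,
      HasDerivAt (v · x) (w s x - u s x * v s x) s) :
    HasDerivAt (fun s => ∫ x in Ioo a b, Real.log (M / v s x) * φ x ^ 2)
      ((∫ x in Ioo a b, u t x * φ x ^ 2) - ∫ x in Ioo a b, w t x / v t x * φ x ^ 2) t := by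
  have htI : t ∈ Icc t₀ t₁ := Ioo_subset_Icc_self ht
  have hF' : HasDerivAt (fun s => ∫ x in Ioo a b, Real.log (M / v s x) * φ x ^ 2)
      (∫ x in Ioo a b, (u t x - w t x / v t x) * φ x ^ 2) t := by
    refine hasDerivAt_setIntegral_Ioo_of_continuousOn
      (F := fun s x => Real.log (M / v s x) * φ x ^ 2)
      (F' := fun s x => (u s x - w s x / v s x) * φ x ^ 2) ht (fun s hs => ?_) ?_
      fun s hs x hx => ?_
    · have hsI : s ∈ Icc t₀ t₁ := Ioo_subset_Icc_self hs
      exact ((continuousOn_const.div (hv.uncurry_left s hsI) (hv0 s hsI)).log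
        fun x hx => div_ne_zero hM (hv0 s hsI x hx)).mul (hφ.pow 2)
    · exact (hu.sub (hw.div hv fun q hq => hv0 _ hq.1 _ hq.2)).mul
        ((hφ.comp continuousOn_snd fun q hq => hq.2).pow 2)
    · have hvsx := hv0 s (Ioo_subset_Icc_self hs) x hx
      refine (((hderiv s hs x hx).log_const_div hvsx hM).mul_const _).congr_deriv ?_
      field_simp
      ring
  convert hF' using 1
  rw [← integral_sub]
  · simp_rw [sub_mul]
  · exact ((hu.uncurry_left t htI).mul (hφ.pow 2)).integrableOn_Icc.mono_set Ioo_subset_Icc_self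
  · exact (((hw.uncurry_left t htI).div (hv.uncurry_left t htI) (hv0 t htI)).mul
      (hφ.pow 2)).integrableOn_Icc.mono_set Ioo_subset_Icc_self

theorem stmt_17_general (a b T M : ℝ) (hab : a < b)
    (u v vx vxx : ℝ → ℝ → ℝ) (φ φ' φ'' : ℝ → ℝ)
    (hu_cont : Continuous fun q : ℝ × ℝ => u q.1 q.2)
    (hv_pos : ∀ t ∈ Set.Icc 0 T, ∀ x ∈ Set.Icc a b, 0 < v t x)
    (hv_le : ∀ t ∈ Set.Icc 0 T, ∀ x ∈ Set.Icc a b, v t x ≤ M)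
    (hvx : ∀ t ∈ Set.Icc 0 T, ∀ x ∈ Set.Icc a b, HasDerivAt (fun y => v t y) (vx t x) x)
    (hvxx : ∀ t ∈ Set.Icc 0 T, ∀ x ∈ Set.Icc a b, HasDerivAt (fun y => vx t y) (vxx t x) x)
    (hvxx_cont : Continuous fun q : ℝ × ℝ => vxx q.1 q.2)
    (hpde : ∀ t ∈ Set.Icc 0 T, ∀ x ∈ Set.Icc a b,
      HasDerivAt (fun s => v s x) (vxx t x - u t x * v t x) t)
    (hφ : ∀ x : ℝ, HasDerivAt φ (φ' x) x)
    (hφ' : ∀ x : ℝ, HasDerivAt φ' (φ'' x) x)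
    (hφsupp : tsupport φ ⊆ Set.Ioo a b) :
    ∀ t ∈ Set.Ioo 0 T,
      deriv (fun s => ∫ x in Set.Ioo a b, Real.log (M / v s x) * (φ x) ^ 2) t
          + (1/2) * (∫ x in Set.Ioo a b, (vx t x) ^ 2 / (v t x) ^ 2 * (φ x) ^ 2) ≤
        2 * (∫ x in Set.Ioo a b, (φ' x) ^ 2)
          + ∫ x in Set.Ioo a b, u t x * (φ x) ^ 2 := by
  intro t ht
  have htI : t ∈ Icc 0 T := Ioo_subset_Icc_self ht
  have ha : a ∈ Icc a b := left_mem_Icc.2 hab.le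
  have hM : 0 < M := (hv_pos t htI a ha).trans_le (hv_le t htI a ha)
  have hv0 s hs x hx : v s x ≠ 0 := (hv_pos s hs x hx).ne'
  have hv : ContinuousOn (uncurry v) (Icc 0 T ×ˢ Icc a b) :=
    continuousOn_uncurry_of_hasDerivWithinAt_sub_mul (convex_Icc 0 T)
      (isCompact_Icc.prod isCompact_Icc) hu_cont.continuousOn hvxx_cont.continuousOn
      (fun s hs => HasDerivAt.continuousOn (hvx s hs))
      (fun s hs x hx => (abs_of_pos (hv_pos s hs x hx)).trans_le (hv_le s hs x hx))
      fun s hs x hx => (hpde s hs x hx).hasDerivWithinAt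
  have hφc : ContinuousOn φ (Icc a b) := HasDerivAt.continuousOn fun x _ => hφ x
  have hφ'c : ContinuousOn φ' (Icc a b) := HasDerivAt.continuousOn fun x _ => hφ' x
  have hφ_eq_zero {x : ℝ} (hx : x ∉ Ioo a b) : φ x = 0 :=
    image_eq_zero_of_notMem_tsupport fun h => hx (hφsupp h)
  have htime := hasDerivAt_setIntegral_log_const_div_mul_sq ht hM.ne' hu_cont.continuousOn
    hvxx_cont.continuousOn hv hv0 hφc fun s hs => hpde s (Ioo_subset_Icc_self hs)
  have hspace := half_setIntegral_Ioo_sq_div_mul_sq_le hab.le (hvx t htI) (hvxx t htI)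
    (hvxx_cont.uncurry_left t).continuousOn (hv0 t htI) (fun x _ => hφ x) hφ'c
    (hφ_eq_zero (lt_irrefl a ·.1)) (hφ_eq_zero (lt_irrefl b ·.2))
  rw [htime.deriv]
  linarith

/-- Lemma 5.3-type estimate: if `v > 0` solves `v_t = v_xx − u v` classically
on `[0,T] × [a,b]` with `u ≥ 0` continuous and Neumann boundary conditions,
and `φ` is a `C²` cutoff compactly supported in `(a,b)` with `0 ≤ φ ≤ 1`, then
for every `t ∈ (0,T)`,
`(d/dt) ∫ ln(M/v) φ² + (1/2) ∫ (v_x²/v²) φ² ≤ 2 ∫ φ_x² + ∫ u φ²`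
whenever `v ≤ M`. -/
theorem stmt_17 (a b T M : ℝ) (hab : a < b) (hT : 0 < T)
    (u v vx vxx : ℝ → ℝ → ℝ) (φ φ' φ'' : ℝ → ℝ)
    (hu_cont : Continuous fun q : ℝ × ℝ => u q.1 q.2)
    (hu_nonneg : ∀ t x, 0 ≤ u t x)
    (hv_pos : ∀ t ∈ Set.Icc 0 T, ∀ x ∈ Set.Icc a b, 0 < v t x)
    (hv_le : ∀ t ∈ Set.Icc 0 T, ∀ x ∈ Set.Icc a b, v t x ≤ M)
    (hvx : ∀ t ∈ Set.Icc 0 T, ∀ x ∈ Set.Icc a b, HasDerivAt (fun y => v t y) (vx t x) x)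
    (hvxx : ∀ t ∈ Set.Icc 0 T, ∀ x ∈ Set.Icc a b, HasDerivAt (fun y => vx t y) (vxx t x) x)
    (hvxx_cont : Continuous fun q : ℝ × ℝ => vxx q.1 q.2)
    (hpde : ∀ t ∈ Set.Icc 0 T, ∀ x ∈ Set.Icc a b,
      HasDerivAt (fun s => v s x) (vxx t x - u t x * v t x) t)
    (hNeumann : ∀ t ∈ Set.Icc 0 T, vx t a = 0 ∧ vx t b = 0)
    (hφ : ∀ x : ℝ, HasDerivAt φ (φ' x) x)
    (hφ' : ∀ x : ℝ, HasDerivAt φ' (φ'' x) x)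
    (hφ''c : Continuous φ'')
    (hφsupp : tsupport φ ⊆ Set.Ioo a b)
    (hφ01 : ∀ x : ℝ, φ x ∈ Set.Icc (0:ℝ) 1) :
    ∀ t ∈ Set.Ioo 0 T,
      deriv (fun s => ∫ x in Set.Ioo a b, Real.log (M / v s x) * (φ x) ^ 2) t
          + (1/2) * (∫ x in Set.Ioo a b, (vx t x) ^ 2 / (v t x) ^ 2 * (φ x) ^ 2) ≤
        2 * (∫ x in Set.Ioo a b, (φ' x) ^ 2)
          + ∫ x in Set.Ioo a b, u t x * (φ x) ^ 2 :=
  stmt_17_general a b T M hab u v vx vxx φ φ' φ'' hu_cont hv_pos hv_le hvx hvxx hvxx_cont hpde hφ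
    hφ' hφsupp
end
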